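/- For every positive integer n: ∑_{k=1}^{n} ((-1)^{k-1}/k^2) · binom(n, k) · H_{n−k} = (H_n · (H_n^2 + H_n^{(2)}))/2 − ∑_{k=0}^{n-1} (-1)^k · (H_n − H_k) / ((k+1)(n−k) · binom(n, k)), as an identity of rational numbers. -/

import Mathlib

/-!
Write `T a n = ∑ (-1)^(k-1) C(n,k) aₖ`, `U a n` for the same sum weighted by `H_{n-k}`, and
`R a n = ∑ (-1)^(k-1) aₖ / C(n,k)`, all over `1 ≤ k ≤ n`. Pascal's rule and
`k C(n+1,k) = (n+1) C(n,k-1)` give recurrences in `n` trading a coefficient `aₖ / k` for `aₖ`,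
e.g. `T (a/k) (n+1) = T (a/k) n + T a (n+1) / (n+1)`, while
`(n+1) / (k C(n,k)) = 1/C(n,k-1) + 1/C(n,k)` makes `R (a/k)` telescope. From `T 1 (n+1) = 1`
this gives closed forms for `aₖ ∈ {1, 1/k, 1/k²}`. The left side is `U (1/k²) n`, the subtracted
sum is `R ((H_n - H_{k-1})/k²) n`, and their sum obeys the recurrence of `H_n (H_n² + H_n⁽²⁾)/2`:
the alternating sums `∑ (-1)^j/j²` in the closed forms of `U (1/k)` and `R (1/k²)` cancel.
-/

/-- The `n`-th harmonic number as a rational number. -/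
def Hq (n : ℕ) : ℚ := ∑ i ∈ Finset.range n, 1 / (i + 1)

/-- The `n`-th generalized harmonic number of order 2 as a rational number. -/
def H2q (n : ℕ) : ℚ := ∑ i ∈ Finset.range n, 1 / ((i : ℚ) + 1) ^ 2


open Finset

lemma Hq_succ (n : ℕ) : Hq (n + 1) = Hq n + 1 / ((n : ℚ) + 1) := by
  simp [Hq, sum_range_succ]

lemma H2q_succ (n : ℕ) : H2q (n + 1) = H2q n + 1 / ((n : ℚ) + 1) ^ 2 := by
  simp [H2q, sum_range_succ]

def altH2q (n : ℕ) : ℚ := ∑ i ∈ range n, (-1) ^ (i + 1) / ((i : ℚ) + 1) ^ 2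

lemma altH2q_succ (n : ℕ) : altH2q (n + 1) = altH2q n + (-1) ^ (n + 1) / ((n : ℚ) + 1) ^ 2 := by
  simp [altH2q, sum_range_succ]

namespace Nat

lemma cast_choose_ne_zero {n k : ℕ} (h : k ≤ n) : (n.choose k : ℚ) ≠ 0 := by
  exact_mod_cast (Nat.choose_pos h).ne'

lemma cast_add_one_mul_choose (n k : ℕ) :
    ((n : ℚ) + 1) * n.choose k = (n + 1).choose (k + 1) * ((k : ℚ) + 1) := by
  exact_mod_cast Nat.add_one_mul_choose_eq n k

lemma cast_choose_succ_mul_sub {n k : ℕ} (h : k ≤ n) :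
    ((n + 1).choose (k + 1) : ℚ) * ((n : ℚ) - k) = ((n : ℚ) + 1) * n.choose (k + 1) := by
  have := Nat.choose_mul_succ_eq n (k + 1)
  rw [Nat.add_sub_add_right] at this
  rw [← Nat.cast_sub h, mul_comm ((n : ℚ) + 1)]
  exact_mod_cast this.symm

lemma cast_choose_succ_right {n k : ℕ} (h : k ≤ n) :
    (n.choose (k + 1) : ℚ) * ((k : ℚ) + 1) = n.choose k * ((n : ℚ) - k) := by
  rw [← Nat.cast_sub h]
  exact_mod_cast Nat.choose_succ_right_eq n k

end Nat

/-! In the three sums below the sequence is indexed from `0`: `a i` is the coefficient of the term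
`k = i + 1`. -/

def altChooseSum (a : ℕ → ℚ) (n : ℕ) : ℚ :=
  ∑ i ∈ range n, (-1) ^ i * n.choose (i + 1) * a i

def altChooseHarmonicSum (a : ℕ → ℚ) (n : ℕ) : ℚ :=
  ∑ i ∈ range n, (-1) ^ i * n.choose (i + 1) * a i * Hq (n - (i + 1))

def altInvChooseSum (a : ℕ → ℚ) (n : ℕ) : ℚ :=
  ∑ i ∈ range n, (-1) ^ i * a i / n.choose (i + 1)

lemma altChooseSum_one (n : ℕ) : altChooseSum 1 (n + 1) = 1 := by
  have h := Int.alternating_sum_range_choose_of_ne n.succ_ne_zero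
  rw [sum_range_succ'] at h
  have h' : ∑ i ∈ range (n + 1), (-1 : ℚ) ^ (i + 1) * (n + 1).choose (i + 1) + 1 = 0 := by
    exact_mod_cast (by simpa using h)
  have hneg : ∑ i ∈ range (n + 1), (-1 : ℚ) ^ (i + 1) * (n + 1).choose (i + 1)
      = -altChooseSum 1 (n + 1) := by
    simp [altChooseSum, pow_succ, ← sum_neg_distrib]
  linarith

section Recurrences

variable {a b : ℕ → ℚ}

lemma cast_choose_succ_mul (hab : ∀ i, a i = (i + 1) * b i) (n i : ℕ) :
    ((n + 1).choose (i + 1) : ℚ) * b i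
      = n.choose (i + 1) * b i + (n + 1).choose (i + 1) * a i / (n + 1) := by
  have absorb : ((n + 1).choose (i + 1) : ℚ) * a i / (n + 1) = n.choose i * b i := by
    rw [div_eq_iff (by positivity), hab]
    linear_combination (-b i) * Nat.cast_add_one_mul_choose n i
  rw [absorb]
  linear_combination b i * (by exact_mod_cast Nat.choose_succ_succ' n i :
    ((n + 1).choose (i + 1) : ℚ) = n.choose i + n.choose (i + 1))

lemma altChooseSum_succ (hab : ∀ i, a i = (i + 1) * b i) (n : ℕ) :
    altChooseSum b (n + 1) = altChooseSum b n + altChooseSum a (n + 1) / (n + 1) := by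
  simp only [altChooseSum, mul_assoc, cast_choose_succ_mul hab, mul_add, sum_add_distrib,
    sum_div, mul_div_assoc]
  simp [sum_range_succ _ n]

lemma altChooseHarmonicSum_succ (hab : ∀ i, a i = (i + 1) * b i) (n : ℕ) :
    altChooseHarmonicSum b (n + 1) = altChooseHarmonicSum b n
      + (altChooseSum b (n + 1) + altChooseHarmonicSum a (n + 1)) / (n + 1)
      - (-1) ^ n * b n / (n + 1) := by
  have hn : (n : ℚ) + 1 ≠ 0 := by positivity
  have shift : ∑ i ∈ range (n + 1), (-1) ^ i * n.choose (i + 1) * b i * Hq (n + 1 - (i + 1))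
      = altChooseHarmonicSum b n + (altChooseSum b (n + 1) - (-1) ^ n * b n) / (n + 1) := by
    rw [sum_range_succ, Nat.choose_succ_self, altChooseSum, sum_range_succ, Nat.choose_self]
    simp only [Nat.cast_zero, Nat.cast_one, mul_zero, zero_mul, add_zero, mul_one,
      add_sub_cancel_right, altChooseHarmonicSum, sum_div, ← sum_add_distrib]
    refine sum_congr rfl fun i hi => ?_
    have hi : i < n := mem_range.mp hi
    have hsub : ((n - (i + 1) : ℕ) : ℚ) + 1 = n - i := by
      rw [Nat.cast_sub hi]; push_cast; ring
    have hni : (n : ℚ) - i ≠ 0 := by rw [← hsub]; positivity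
    have absorb : (n.choose (i + 1) : ℚ) / (n - i) = (n + 1).choose (i + 1) / (n + 1) := by
      rw [div_eq_div_iff hni hn]
      linear_combination -(Nat.cast_choose_succ_mul_sub hi.le)
    rw [show n + 1 - (i + 1) = n - (i + 1) + 1 by omega, Hq_succ, hsub]
    linear_combination (-1) ^ i * b i * absorb
  have pascal (i : ℕ) : (-1) ^ i * ((n + 1).choose (i + 1) : ℚ) * b i * Hq (n + 1 - (i + 1))
      = (-1) ^ i * n.choose (i + 1) * b i * Hq (n + 1 - (i + 1))
        + (-1) ^ i * (n + 1).choose (i + 1) * a i * Hq (n + 1 - (i + 1)) / (n + 1) := by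
    linear_combination (-1) ^ i * Hq (n + 1 - (i + 1)) * cast_choose_succ_mul hab n i
  rw [altChooseHarmonicSum]
  simp only [pascal, sum_add_distrib, shift, ← sum_div, altChooseHarmonicSum]
  ring

lemma altInvChooseSum_succ (hab : ∀ i, a i = (i + 1) * b i) (n : ℕ) :
    altInvChooseSum b (n + 1) = altInvChooseSum b n - altInvChooseSum a n / (n + 1)
      + (-1) ^ n * b n := by
  rw [altInvChooseSum, sum_range_succ, Nat.choose_self, Nat.cast_one, div_one, altInvChooseSum,
    altInvChooseSum, sum_div, ← sum_sub_distrib]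
  congr 1
  refine sum_congr rfl fun i hi => ?_
  have hi : i < n := mem_range.mp hi
  have inv_choose_succ : ((n + 1).choose (i + 1) : ℚ)⁻¹
      = (n.choose (i + 1) : ℚ)⁻¹ - (i + 1) * (n.choose (i + 1) : ℚ)⁻¹ / (n + 1) := by
    have := Nat.cast_choose_ne_zero hi
    have := Nat.cast_choose_ne_zero (show i + 1 ≤ n + 1 by omega)
    field_simp
    linear_combination -Nat.cast_choose_succ_mul_sub hi.le
  rw [hab]
  linear_combination (-1) ^ i * b i * inv_choose_succ

-- Summation by parts.
lemma add_one_mul_altInvChooseSum (hab : ∀ i, a i = (i + 1) * b i) (n : ℕ) :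
    (n + 1) * altInvChooseSum b n
      = a 0 - (-1) ^ n * a n - altInvChooseSum (fun i => a (i + 1) - a i) n := by
  have split : ∀ i ∈ range n, (n + 1) * ((-1) ^ i * b i / n.choose (i + 1))
      = (-1) ^ i * a i / n.choose i + (-1) ^ i * a i / n.choose (i + 1) := by
    intro i hi
    have hi : i < n := mem_range.mp hi
    have inv_choose_split : ((n : ℚ) + 1) * (n.choose (i + 1) : ℚ)⁻¹
        = (i + 1) * ((n.choose i : ℚ)⁻¹ + (n.choose (i + 1) : ℚ)⁻¹) := by
      have := Nat.cast_choose_ne_zero hi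
      have := Nat.cast_choose_ne_zero hi.le
      have pascal := Nat.cast_add_one_mul_choose n i
      rw [Nat.choose_succ_succ', Nat.cast_add] at pascal
      field_simp
      linear_combination pascal
    rw [hab]
    linear_combination (-1) ^ i * b i * inv_choose_split
  have telescope := sum_range_succ' (fun i => (-1) ^ i * a i / n.choose i) n
  rw [sum_range_succ] at telescope
  simp only [altInvChooseSum, mul_sum, sum_congr rfl split, sum_add_distrib, sub_div, mul_sub,
    sum_sub_distrib]
  simp [pow_succ, neg_div, sum_neg_distrib] at telescope
  linarith

end Recurrences

lemma altChooseHarmonicSum_one (n : ℕ) :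
    altChooseHarmonicSum 1 (n + 1) = Hq (n + 1) - (-1) ^ n / (n + 1) := by
  have absorb (i : ℕ) : (-1) ^ i * ((n + 1).choose (i + 1) : ℚ) * ((i : ℚ) + 1)
      * Hq (n + 1 - (i + 1)) = (n + 1) * ((-1) ^ i * n.choose i * Hq (n - i)) := by
    rw [Nat.add_sub_add_right]
    linear_combination -(-1) ^ i * Hq (n - i) * Nat.cast_add_one_mul_choose n i
  have hk : altChooseHarmonicSum (fun i => (i : ℚ) + 1) (n + 1)
      = (n + 1) * (Hq n - altChooseHarmonicSum 1 n) := by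
    simp only [altChooseHarmonicSum, absorb, ← mul_sum, Pi.one_apply, mul_one]
    rw [sum_range_succ']
    congr 1
    simp [pow_succ, sum_neg_distrib]
    ring
  rw [altChooseHarmonicSum_succ (a := fun i => (i : ℚ) + 1) (fun i => by simp), altChooseSum_one,
    hk, Hq_succ, Pi.one_apply]
  field_simp
  ring

lemma altChooseSum_inv (n : ℕ) : altChooseSum (fun i => 1 / ((i : ℚ) + 1)) n = Hq n := by
  induction n with
  | zero => simp [altChooseSum, Hq]
  | succ n ih =>
    rw [altChooseSum_succ (a := 1) (fun i => by rw [Pi.one_apply]; field_simp), ih,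
      altChooseSum_one, Hq_succ]

lemma altChooseSum_inv_sq (n : ℕ) :
    altChooseSum (fun i => 1 / ((i : ℚ) + 1) ^ 2) n = (Hq n ^ 2 + H2q n) / 2 := by
  induction n with
  | zero => simp [altChooseSum, Hq, H2q]
  | succ n ih =>
    rw [altChooseSum_succ (a := fun i => 1 / ((i : ℚ) + 1)) (fun i => by field_simp), ih,
      altChooseSum_inv, Hq_succ, H2q_succ]
    field_simp
    ring

lemma altChooseHarmonicSum_inv (n : ℕ) :
    altChooseHarmonicSum (fun i => 1 / ((i : ℚ) + 1)) n = Hq n ^ 2 + H2q n + 2 * altH2q n := by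
  induction n with
  | zero => simp [altChooseHarmonicSum, Hq, H2q, altH2q]
  | succ n ih =>
    rw [altChooseHarmonicSum_succ (a := 1) (fun i => by rw [Pi.one_apply]; field_simp), ih,
      altChooseSum_inv, altChooseHarmonicSum_one, Hq_succ, H2q_succ, altH2q_succ]
    field_simp
    ring

lemma altInvChooseSum_inv (n : ℕ) :
    altInvChooseSum (fun i => 1 / ((i : ℚ) + 1)) n = (1 - (-1) ^ n) / (n + 1) := by
  rw [eq_div_iff (by positivity), mul_comm,
    add_one_mul_altInvChooseSum (a := 1) (fun i => by rw [Pi.one_apply]; field_simp)]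
  simp [altInvChooseSum]

lemma altInvChooseSum_inv_sq (n : ℕ) :
    altInvChooseSum (fun i => 1 / ((i : ℚ) + 1) ^ 2) n = -H2q n - 2 * altH2q n := by
  induction n with
  | zero => simp [altInvChooseSum, H2q, altH2q]
  | succ n ih =>
    rw [altInvChooseSum_succ (a := fun i => 1 / ((i : ℚ) + 1)) (fun i => by field_simp), ih,
      altInvChooseSum_inv, H2q_succ, altH2q_succ]
    field_simp
    ring

lemma altInvChooseSum_harmonic_sub (n : ℕ) :
    altInvChooseSum (fun i => (Hq n - Hq i) / (i + 1)) n
      = (Hq n + altInvChooseSum (fun i => 1 / ((i : ℚ) + 1)) n) / (n + 1) := by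
  have increments : altInvChooseSum (fun i => Hq n - Hq (i + 1) - (Hq n - Hq i)) n
      = -altInvChooseSum (fun i => 1 / ((i : ℚ) + 1)) n := by
    simp only [altInvChooseSum, Hq_succ, ← sum_neg_distrib]
    exact sum_congr rfl fun i _ => by ring
  rw [eq_div_iff (by positivity), mul_comm,
    add_one_mul_altInvChooseSum (a := fun i => Hq n - Hq i) (fun i => by field_simp), increments]
  simp [Hq]

lemma altInvChooseSum_harmonic_sub_sq_succ (n : ℕ) :
    altInvChooseSum (fun i => (Hq (n + 1) - Hq i) / ((i : ℚ) + 1) ^ 2) (n + 1)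
      = altInvChooseSum (fun i => (Hq n - Hq i) / ((i : ℚ) + 1) ^ 2) n
        - altInvChooseSum (fun i => (Hq n - Hq i) / (i + 1)) n / (n + 1)
        + altInvChooseSum (fun i => 1 / ((i : ℚ) + 1) ^ 2) (n + 1) / (n + 1) := by
  have shift : altInvChooseSum (fun i => (Hq (n + 1) - Hq i) / ((i : ℚ) + 1) ^ 2) (n + 1)
      = altInvChooseSum (fun i => (Hq n - Hq i) / ((i : ℚ) + 1) ^ 2) (n + 1)
        + altInvChooseSum (fun i => 1 / ((i : ℚ) + 1) ^ 2) (n + 1) / (n + 1) := by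
    simp only [altInvChooseSum, Hq_succ, sum_div, ← sum_add_distrib]
    exact sum_congr rfl fun i _ => by ring
  rw [shift, altInvChooseSum_succ (a := fun i => (Hq n - Hq i) / (i + 1)) (fun i => by field_simp)]
  simp

lemma altChooseHarmonicSum_add_altInvChooseSum (n : ℕ) :
    altChooseHarmonicSum (fun i => 1 / ((i : ℚ) + 1) ^ 2) n
      + altInvChooseSum (fun i => (Hq n - Hq i) / ((i : ℚ) + 1) ^ 2) n
      = Hq n * (Hq n ^ 2 + H2q n) / 2 := by
  induction n with
  | zero => simp [altChooseHarmonicSum, altInvChooseSum, Hq]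
  | succ n ih =>
    rw [altChooseHarmonicSum_succ (a := fun i => 1 / ((i : ℚ) + 1)) (fun i => by field_simp),
      altInvChooseSum_harmonic_sub_sq_succ, eq_sub_of_add_eq ih, altChooseSum_inv_sq,
      altChooseHarmonicSum_inv, altInvChooseSum_inv_sq, altInvChooseSum_harmonic_sub,
      altInvChooseSum_inv, Hq_succ, H2q_succ, altH2q_succ]
    field_simp
    ring

theorem stmt_19_general (n : ℕ) :
    ∑ k ∈ Finset.Icc 1 n, (-1 : ℚ) ^ (k - 1) / (k : ℚ) ^ 2 * (Nat.choose n k : ℚ) *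
        Hq (n - k) =
      Hq n * (Hq n ^ 2 + H2q n) / 2 -
        ∑ k ∈ Finset.range n, (-1 : ℚ) ^ k * (Hq n - Hq k) /
          (((k : ℚ) + 1) * ((n : ℚ) - k) * (Nat.choose n k : ℚ)) := by
  have lhs : ∑ k ∈ Icc 1 n, (-1 : ℚ) ^ (k - 1) / (k : ℚ) ^ 2 * (n.choose k : ℚ) * Hq (n - k)
      = altChooseHarmonicSum (fun i => 1 / ((i : ℚ) + 1) ^ 2) n := by
    rw [← Ico_add_one_right_eq_Icc, sum_Ico_eq_sum_range, Nat.add_sub_cancel, altChooseHarmonicSum]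
    refine sum_congr rfl fun i _ => ?_
    rw [add_comm 1 i, Nat.add_sub_cancel]
    push_cast
    ring
  have rhs : ∑ k ∈ range n, (-1 : ℚ) ^ k * (Hq n - Hq k) /
        (((k : ℚ) + 1) * ((n : ℚ) - k) * (n.choose k : ℚ))
      = altInvChooseSum (fun i => (Hq n - Hq i) / ((i : ℚ) + 1) ^ 2) n := by
    refine sum_congr rfl fun k hk => ?_
    have hk : k < n := mem_range.mp hk
    have := Nat.cast_choose_ne_zero hk
    rw [mul_assoc, mul_comm ((n : ℚ) - k), ← Nat.cast_choose_succ_right hk.le]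
    field_simp
  rw [lhs, rhs, ← altChooseHarmonicSum_add_altInvChooseSum, add_sub_cancel_right]

theorem stmt_19 (n : ℕ) (hn : 0 < n) :
    ∑ k ∈ Finset.Icc 1 n, (-1 : ℚ) ^ (k - 1) / (k : ℚ) ^ 2 * (Nat.choose n k : ℚ) *
        Hq (n - k) =
      Hq n * (Hq n ^ 2 + H2q n) / 2 -
        ∑ k ∈ Finset.range n, (-1 : ℚ) ^ k * (Hq n - Hq k) /
          (((k : ℚ) + 1) * ((n : ℚ) - k) * (Nat.choose n k : ℚ)) :=
  stmt_19_general n
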